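/- arXiv:0707.0285 — 2 statements merged into one kernel-verified Lean document; each statement's English description precedes it below -/
import Mathlib

section
/- Let φ ∈ L²(ℝ), λ > 0, Λ = 2π/λ, with the Riesz condition. Define E_λ(ξ) = (∑_{n≠0} |φ̂(ξ+nΛ)|²) / (∑_{n∈ℤ} |φ̂(ξ+nΛ)|²). Suppose w is positive monotone increasing on (0,∞) with M_w(φ) = ∫ w(|ξ|)|φ̂(ξ)|² dξ < ∞ and w(ξ) ≥ cξ^{1+ε} on [1,∞). Then ∫_ℝ E_λ(ξ)|φ̂(ξ)|² dξ ≤ 2 M_w(φ) ∑_{n=1}^∞ 1/w((2n−1)π/λ), and the series on the right converges. -/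
open MeasureTheory Complex

noncomputable section

/-- Fourier transform with the convention `f̂(ξ) = (2π)^(-1/2) ∫ e^(-ixξ) f(x) dx`. -/
def FT (f : ℝ → ℂ) (ξ : ℝ) : ℂ :=
  ((Real.sqrt (2 * Real.pi))⁻¹ : ℝ) * ∫ x : ℝ, Complex.exp (-(Complex.I * x * ξ)) * f x

/-- The prefilter (crosscorrelation) operator `(P_φ f)(x) = ∫ f(y) conj(φ(y-x)) dy`. -/
def Pfil (φ f : ℝ → ℂ) (x : ℝ) : ℂ :=
  ∫ y : ℝ, f y * (starRingEnd ℂ) (φ (y - x))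

/-- The localization space `𝒫_φ`, the range of the prefilter `P_φ` on `L²(ℝ)`. -/
def Pspace (φ : ℝ → ℂ) : Set (ℝ → ℂ) :=
  {g | ∃ f : ℝ → ℂ, MemLp f 2 volume ∧ g = Pfil φ f}

/-- The norm of the localization space `𝒫_φ`. -/
def Nφ (φ g : ℝ → ℂ) : ℝ :=
  Real.sqrt ((2 * Real.pi)⁻¹ *
    ∫ ξ in {ξ : ℝ | FT φ ξ ≠ 0}, ‖FT g ξ‖ ^ 2 / ‖FT φ ξ‖ ^ 2)

/-- The inner product of the localization space `𝒫_φ`. -/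
def innerφ (φ g₁ g₂ : ℝ → ℂ) : ℂ :=
  ((2 * Real.pi)⁻¹ : ℂ) *
    ∫ ξ in {ξ : ℝ | FT φ ξ ≠ 0},
      FT g₁ ξ * (starRingEnd ℂ) (FT g₂ ξ) * ((‖FT φ ξ‖ ^ 2 : ℝ) : ℂ)⁻¹

/-- Membership in the reconstruction subspace `ℛ_λ(φ)`, the closed span in `𝒫_φ`
(with respect to `‖·‖_φ`) of the shifts `Φ(· − nλ)` of the autocorrelation `Φ = P_φ φ`. -/
def InR (φ : ℝ → ℂ) (lam : ℝ) (g : ℝ → ℂ) : Prop :=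
  g ∈ Pspace φ ∧ ∀ ε : ℝ, 0 < ε → ∃ (F : Finset ℤ) (c : ℤ → ℂ),
    Nφ φ (fun x => g x - ∑ n ∈ F, c n * Pfil φ φ (x - n * lam)) < ε

/-!
Write `h = |φ̂|²`, `p = π/λ` and `S(ξ) = ∑ₙ h(ξ + 2pn)`, so the integrand is `(S - h)/S · h`.
On `|ξ| ≥ p` it is at most `h`, and the generalized Chebyshev inequality bounds
`∫_{|ξ| ≥ p} h` by `M_w(φ)/w(p)`. On `|ξ| < p` it is at most `S - h = ∑_{n ≠ 0} h(ξ + 2pn)`,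
and all the points `ξ + 2pn` with `n ≠ 0` lie in `|x| ≥ p`; since `(-p, p]` is a fundamental
domain of `2pℤ`, periodizing gives `∫_{|ξ|<p} (S - h) ≤ ∫_{|ξ| ≥ p} h ≤ M_w(φ)/w(p)` again.
Hence the integral is at most `2 M_w(φ)/w(π/λ)`, i.e. `2 M_w(φ)` times the first term of the series.
-/

open Set Filter
open scoped ENNReal

lemma measurable_FT {f : ℝ → ℂ} (hf : AEStronglyMeasurable f volume) : Measurable (FT f) := by
  have hFT : FT f = FT (hf.mk f) := by
    funext ξ
    unfold FT
    congr 1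
    exact integral_congr_ae (hf.ae_eq_mk.mono fun x hx => by simp only [hx])
  have hk : Measurable fun q : ℝ × ℝ => Complex.exp (-(Complex.I * q.2 * q.1)) * hf.mk f q.2 :=
    (Complex.measurable_exp.comp (by fun_prop)).mul
      (hf.stronglyMeasurable_mk.measurable.comp measurable_snd)
  rw [hFT]
  exact measurable_const.mul hk.stronglyMeasurable.integral_prod_right'.measurable

section AliasingRatio

variable {β : Type*} {u : β → ℝ}

lemma tsum_sub_div_tsum_mul_nonneg (hu : ∀ n, 0 ≤ u n) (i : β) :
    0 ≤ (∑' n, u n - u i) / (∑' n, u n) * u i := by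
  by_cases hs : Summable u
  · have hle : u i ≤ ∑' n, u n := hs.le_tsum i fun j _ => hu j
    exact mul_nonneg (div_nonneg (sub_nonneg.2 hle) ((hu i).trans hle)) (hu i)
  · simp [tsum_eq_zero_of_not_summable hs]

lemma tsum_sub_div_tsum_mul_le (hu : ∀ n, 0 ≤ u n) (i : β) :
    (∑' n, u n - u i) / (∑' n, u n) * u i ≤ u i := by
  by_cases hs : Summable u
  · have hle : u i ≤ ∑' n, u n := hs.le_tsum i fun j _ => hu j
    exact mul_le_of_le_one_left (hu i)
      (div_le_one_of_le₀ (sub_le_self _ (hu i)) ((hu i).trans hle))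
  · simp [tsum_eq_zero_of_not_summable hs, hu i]

lemma ofReal_tsum_sub_div_tsum_mul_le (hu : ∀ n, 0 ≤ u n) (i : β) :
    ENNReal.ofReal ((∑' n, u n - u i) / (∑' n, u n) * u i) ≤
      ∑' n, ENNReal.ofReal (u n) - ENNReal.ofReal (u i) := by
  by_cases hs : Summable u
  · have hle : u i ≤ ∑' n, u n := hs.le_tsum i fun j _ => hu j
    rw [← ENNReal.ofReal_tsum_of_nonneg hu hs, ← ENNReal.ofReal_sub _ (hu i)]
    refine ENNReal.ofReal_le_ofReal ?_
    calc (∑' n, u n - u i) / (∑' n, u n) * u i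
        = (∑' n, u n - u i) * (u i / ∑' n, u n) := by ring
      _ ≤ (∑' n, u n - u i) * 1 :=
          mul_le_mul_of_nonneg_left (div_le_one_of_le₀ hle ((hu i).trans hle))
            (sub_nonneg.2 hle)
      _ = ∑' n, u n - u i := mul_one _
  · simp [tsum_eq_zero_of_not_summable hs]

end AliasingRatio

section WeightedChebyshev

variable {w f : ℝ → ℝ}

lemma weight_mul_nonneg_ae (hwpos : ∀ x : ℝ, 0 < x → 0 < w x) (hf : ∀ ξ, 0 ≤ f ξ) :
    0 ≤ᵐ[volume] fun ξ : ℝ => w |ξ| * f ξ := by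
  filter_upwards [measure_eq_zero_iff_ae_notMem.1 (measure_singleton (0 : ℝ))] with ξ hξ
  exact mul_nonneg (hwpos _ (abs_pos.2 hξ)).le (hf ξ)

lemma setLIntegral_le_integral_weight_div {p : ℝ} (hp : 0 < p)
    (hwpos : ∀ x : ℝ, 0 < x → 0 < w x) (hwmono : ∀ x y : ℝ, 0 < x → x ≤ y → w x ≤ w y)
    (hf : ∀ ξ, 0 ≤ f ξ) (hint : Integrable fun ξ : ℝ => w |ξ| * f ξ) :
    ∫⁻ ξ in {ξ : ℝ | p ≤ |ξ|}, ENNReal.ofReal (f ξ) ≤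
      ENNReal.ofReal ((∫ ξ, w |ξ| * f ξ) / w p) := by
  have hwp : 0 < w p := hwpos p hp
  have hs : MeasurableSet {ξ : ℝ | p ≤ |ξ|} := measurableSet_le measurable_const measurable_abs
  calc ∫⁻ ξ in {ξ : ℝ | p ≤ |ξ|}, ENNReal.ofReal (f ξ)
      ≤ ∫⁻ ξ in {ξ : ℝ | p ≤ |ξ|}, ENNReal.ofReal ((w p)⁻¹ * (w |ξ| * f ξ)) := by
        refine setLIntegral_mono' hs fun ξ hξ => ENNReal.ofReal_le_ofReal ?_
        rw [inv_mul_eq_div, le_div_iff₀ hwp, mul_comm]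
        exact mul_le_mul_of_nonneg_right (hwmono p |ξ| hp hξ) (hf ξ)
    _ ≤ ∫⁻ ξ, ENNReal.ofReal ((w p)⁻¹ * (w |ξ| * f ξ)) := setLIntegral_le_lintegral _ _
    _ = ENNReal.ofReal (∫ ξ, (w p)⁻¹ * (w |ξ| * f ξ)) :=
        (ofReal_integral_eq_lintegral_ofReal (hint.const_mul _)
          ((weight_mul_nonneg_ae hwpos hf).mono fun ξ hξ =>
            mul_nonneg (inv_nonneg.2 hwp.le) hξ)).symm
    _ = ENNReal.ofReal ((∫ ξ, w |ξ| * f ξ) / w p) := by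
        rw [integral_const_mul, inv_mul_eq_div]

end WeightedChebyshev

section Periodization

lemma lintegral_Ioc_tsum_add_int_mul {T : ℝ} (hT : 0 < T) (a : ℝ) {f : ℝ → ℝ≥0∞}
    (hf : Measurable f) :
    ∫⁻ x in Ioc a (a + T), ∑' n : ℤ, f (x + n * T) = ∫⁻ x, f x := by
  have hI : ∀ n : ℤ, Ioc (a + n • T) (a + (n + 1) • T) = (· + n * T) '' Ioc a (a + T) := by
    intro n
    rw [image_add_const_Ioc, zsmul_eq_mul, zsmul_eq_mul]
    push_cast
    ring_nf
  calc ∫⁻ x in Ioc a (a + T), ∑' n : ℤ, f (x + n * T)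
      = ∑' n : ℤ, ∫⁻ x in Ioc a (a + T), f (x + n * T) :=
        lintegral_tsum fun n => (hf.comp (measurable_add_const _)).aemeasurable
    _ = ∑' n : ℤ, ∫⁻ x in Ioc (a + n • T) (a + (n + 1) • T), f x := by
        refine tsum_congr fun n => ?_
        rw [hI]
        exact (measurePreserving_add_right volume _).setLIntegral_comp_emb
          (measurableEmbedding_addRight _) f _
    _ = ∫⁻ x in ⋃ n : ℤ, Ioc (a + n • T) (a + (n + 1) • T), f x :=
        (lintegral_iUnion (fun _ => measurableSet_Ioc) (pairwise_disjoint_Ioc_add_zsmul a T) f).symm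
    _ = ∫⁻ x, f x := by rw [iUnion_Ioc_add_zsmul hT, Measure.restrict_univ]

variable {p : ℝ}

lemma le_abs_add_int_mul {ξ : ℝ} (hξ : |ξ| < p) {n : ℤ} (hn : n ≠ 0) :
    p ≤ |ξ + n * (2 * p)| := by
  have hp : 0 < p := (abs_nonneg ξ).trans_lt hξ
  have hn1 : (1 : ℝ) ≤ |(n : ℝ)| := by exact_mod_cast Int.one_le_abs hn
  have htri : |(n : ℝ) * (2 * p)| ≤ |ξ + n * (2 * p)| + |ξ| := by
    simpa using abs_sub_le (ξ + n * (2 * p)) 0 ξ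
  rw [abs_mul, abs_of_pos (by positivity : (0 : ℝ) < 2 * p)] at htri
  nlinarith

lemma tsum_sub_eq_tsum_indicator {ξ : ℝ} (hξ : |ξ| < p) (f : ℝ → ℝ≥0∞) (hf : f ξ ≠ ∞) :
    ∑' n : ℤ, f (ξ + n * (2 * p)) - f ξ =
      ∑' n : ℤ, {x : ℝ | p ≤ |x|}.indicator f (ξ + n * (2 * p)) := by
  rw [ENNReal.tsum_eq_add_tsum_ite (0 : ℤ)]
  simp only [Int.cast_zero, zero_mul, add_zero]
  rw [ENNReal.add_sub_cancel_left hf]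
  refine tsum_congr fun n => ?_
  by_cases hn : n = 0
  · simp [hn, hξ]
  · rw [if_neg hn, indicator_of_mem (s := {x : ℝ | p ≤ |x|}) (le_abs_add_int_mul hξ hn)]

lemma setLIntegral_tsum_sub_le (hp : 0 < p) {f : ℝ → ℝ≥0∞} (hf : Measurable f)
    (hfin : ∀ x, f x ≠ ∞) :
    ∫⁻ ξ in {ξ : ℝ | p ≤ |ξ|}ᶜ, (∑' n : ℤ, f (ξ + n * (2 * p)) - f ξ) ≤
      ∫⁻ ξ in {ξ : ℝ | p ≤ |ξ|}, f ξ := by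
  have hs : MeasurableSet {ξ : ℝ | p ≤ |ξ|} := measurableSet_le measurable_const measurable_abs
  have hsub : {ξ : ℝ | p ≤ |ξ|}ᶜ ⊆ Ioc (-p) (-p + 2 * p) := fun ξ hξ => by
    have := abs_lt.1 (by simpa using hξ)
    constructor <;> linarith
  calc ∫⁻ ξ in {ξ : ℝ | p ≤ |ξ|}ᶜ, (∑' n : ℤ, f (ξ + n * (2 * p)) - f ξ)
      = ∫⁻ ξ in {ξ : ℝ | p ≤ |ξ|}ᶜ,
          ∑' n : ℤ, {x : ℝ | p ≤ |x|}.indicator f (ξ + n * (2 * p)) :=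
        setLIntegral_congr_fun hs.compl fun ξ hξ =>
          tsum_sub_eq_tsum_indicator (by simpa using hξ) f (hfin ξ)
    _ ≤ ∫⁻ ξ in Ioc (-p) (-p + 2 * p),
          ∑' n : ℤ, {x : ℝ | p ≤ |x|}.indicator f (ξ + n * (2 * p)) :=
        lintegral_mono_set hsub
    _ = ∫⁻ ξ in {ξ : ℝ | p ≤ |ξ|}, f ξ := by
        rw [lintegral_Ioc_tsum_add_int_mul (by positivity) _ (hf.indicator hs),
          lintegral_indicator hs]

end Periodization

lemma integral_tsum_sub_div_tsum_mul_le {h w : ℝ → ℝ} {p : ℝ} (hp : 0 < p)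
    (hm : Measurable h) (h0 : ∀ ξ, 0 ≤ h ξ)
    (hwpos : ∀ x : ℝ, 0 < x → 0 < w x) (hwmono : ∀ x y : ℝ, 0 < x → x ≤ y → w x ≤ w y)
    (hint : Integrable fun ξ : ℝ => w |ξ| * h ξ) :
    ∫ ξ, (∑' n : ℤ, h (ξ + n * (2 * p)) - h ξ) / (∑' n : ℤ, h (ξ + n * (2 * p))) * h ξ ≤
      2 * ((∫ ξ, w |ξ| * h ξ) / w p) := by
  set S := fun ξ => ∑' n : ℤ, h (ξ + n * (2 * p))
  set g := fun ξ => (S ξ - h ξ) / S ξ * h ξ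
  set s := {ξ : ℝ | p ≤ |ξ|}
  set C := (∫ ξ, w |ξ| * h ξ) / w p
  have hs : MeasurableSet s := measurableSet_le measurable_const measurable_abs
  have hC : 0 ≤ C := div_nonneg (integral_nonneg_of_ae (weight_mul_nonneg_ae hwpos h0))
    (hwpos p hp).le
  have hu : ∀ ξ n, 0 ≤ h (ξ + (n : ℤ) * (2 * p)) := fun _ _ => h0 _
  have hS : Measurable S := Measurable.tsum fun n => hm.comp (measurable_add_const _)
  have hh : Measurable fun ξ => ENNReal.ofReal (h ξ) := ENNReal.measurable_ofReal.comp hm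
  have hg0 : ∀ ξ, 0 ≤ g ξ := fun ξ => by simpa using tsum_sub_div_tsum_mul_nonneg (hu ξ) 0
  have hg_le : ∀ ξ, ENNReal.ofReal (g ξ) ≤ ENNReal.ofReal (h ξ) := fun ξ =>
    ENNReal.ofReal_le_ofReal (by simpa using tsum_sub_div_tsum_mul_le (hu ξ) 0)
  have hg_le_tail : ∀ ξ, ENNReal.ofReal (g ξ) ≤
      ∑' n : ℤ, ENNReal.ofReal (h (ξ + n * (2 * p))) - ENNReal.ofReal (h ξ) := fun ξ => by
    simpa using ofReal_tsum_sub_div_tsum_mul_le (hu ξ) 0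
  have hcheb := setLIntegral_le_integral_weight_div hp hwpos hwmono h0 hint
  rw [integral_eq_lintegral_of_nonneg_ae (ae_of_all _ hg0)
    (((hS.sub hm).div hS).mul hm).aestronglyMeasurable]
  refine ENNReal.toReal_le_of_le_ofReal (by positivity) ?_
  calc ∫⁻ ξ, ENNReal.ofReal (g ξ)
      = (∫⁻ ξ in s, ENNReal.ofReal (g ξ)) + ∫⁻ ξ in sᶜ, ENNReal.ofReal (g ξ) :=
        (lintegral_add_compl _ hs).symm
    _ ≤ (∫⁻ ξ in s, ENNReal.ofReal (h ξ)) + ∫⁻ ξ in sᶜ,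
          (∑' n : ℤ, ENNReal.ofReal (h (ξ + n * (2 * p))) - ENNReal.ofReal (h ξ)) :=
        add_le_add (lintegral_mono hg_le) (lintegral_mono hg_le_tail)
    _ ≤ ENNReal.ofReal C + ENNReal.ofReal C :=
        add_le_add hcheb
          ((setLIntegral_tsum_sub_le hp hh fun _ => ENNReal.ofReal_ne_top).trans hcheb)
    _ = ENNReal.ofReal (2 * C) := by rw [← ENNReal.ofReal_add hC hC, two_mul]

lemma summable_one_div_comp_odd_mul {w : ℝ → ℝ} {c ε p : ℝ} (hc : 0 < c) (hε : 0 < ε)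
    (hp : 0 < p) (hgrow : ∀ ξ : ℝ, 1 ≤ ξ → c * ξ ^ (1 + ε) ≤ w ξ) :
    Summable fun n : ℕ => 1 / w ((2 * n + 1) * p) := by
  refine Summable.of_norm_bounded_eventually_nat
    ((Real.summable_nat_rpow_inv.2 (by linarith : 1 < 1 + ε)).mul_left (c * p ^ (1 + ε))⁻¹) ?_
  obtain ⟨N, hN⟩ := exists_nat_ge p⁻¹
  filter_upwards [eventually_ge_atTop N] with n hn
  have hnp : 1 ≤ n * p := by
    rw [← inv_mul_cancel₀ hp.ne']
    exact mul_le_mul_of_nonneg_right (hN.trans (by exact_mod_cast hn)) hp.le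
  have hx : n * p ≤ (2 * n + 1) * p := by nlinarith
  have hpos : 0 < c * (p ^ (1 + ε) * (n : ℝ) ^ (1 + ε)) := by
    have : (0 : ℝ) < n := by nlinarith
    positivity
  have hw : c * (p ^ (1 + ε) * (n : ℝ) ^ (1 + ε)) ≤ w ((2 * n + 1) * p) := by
    refine le_trans ?_ (hgrow _ (hnp.trans hx))
    rw [← Real.mul_rpow hp.le (Nat.cast_nonneg n), mul_comm p]
    gcongr
  rw [Real.norm_of_nonneg (one_div_nonneg.2 (hpos.trans_le hw).le), ← mul_inv, mul_assoc,
    ← one_div]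
  exact one_div_le_one_div_of_le hpos hw

theorem aliasing_integral_estimate_general
    (φ : ℝ → ℂ) (w : ℝ → ℝ) (c ε : ℝ) (lam Λ M : ℝ)
    (hlam : 0 < lam) (hΛ : Λ = 2 * Real.pi / lam)
    (hφ : MemLp φ 2 volume)
    (hc : 0 < c) (hε : 0 < ε)
    (hwpos : ∀ x : ℝ, 0 < x → 0 < w x)
    (hwmono : ∀ x y : ℝ, 0 < x → x ≤ y → w x ≤ w y)
    (hgrow : ∀ ξ : ℝ, 1 ≤ ξ → c * ξ ^ (1 + ε) ≤ w ξ)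
    (hMint : Integrable (fun ξ : ℝ => w |ξ| * ‖FT φ ξ‖ ^ 2))
    (hM : M = ∫ ξ : ℝ, w |ξ| * ‖FT φ ξ‖ ^ 2) :
    Summable (fun n : ℕ => 1 / w ((2 * n + 1) * Real.pi / lam)) ∧
    (∫ ξ : ℝ,
        (((∑' n : ℤ, ‖FT φ (ξ + n * Λ)‖ ^ 2) - ‖FT φ ξ‖ ^ 2) /
          (∑' n : ℤ, ‖FT φ (ξ + n * Λ)‖ ^ 2)) * ‖FT φ ξ‖ ^ 2)
      ≤ 2 * M * ∑' n : ℕ, 1 / w ((2 * n + 1) * Real.pi / lam) := by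
  have hp : 0 < Real.pi / lam := div_pos Real.pi_pos hlam
  have hsum : Summable fun n : ℕ => 1 / w ((2 * n + 1) * Real.pi / lam) := by
    simpa only [mul_div_assoc] using summable_one_div_comp_odd_mul hc hε hp hgrow
  have hfirst : 1 / w (Real.pi / lam) ≤ ∑' n : ℕ, 1 / w ((2 * n + 1) * Real.pi / lam) := by
    simpa using hsum.le_tsum 0 fun n _ => (one_div_pos.2 (hwpos _ (by positivity))).le
  have hM0 : 0 ≤ M := hM ▸ integral_nonneg_of_ae (weight_mul_nonneg_ae hwpos fun _ => by positivity)
  have hFT : Measurable fun ξ => ‖FT φ ξ‖ ^ 2 :=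
    (measurable_FT hφ.aestronglyMeasurable).norm.pow_const 2
  refine ⟨hsum, ?_⟩
  calc _ ≤ 2 * (M / w (Real.pi / lam)) := by
        rw [hΛ, mul_div_assoc, hM]
        exact integral_tsum_sub_div_tsum_mul_le hp hFT (fun _ => by positivity) hwpos hwmono hMint
    _ = 2 * M * (1 / w (Real.pi / lam)) := by ring
    _ ≤ _ := by gcongr

/-- The key integral estimate in the error analysis:
`∫ E_λ(ξ)|φ̂(ξ)|² dξ ≤ 2 M_w(φ) ∑_{n≥1} 1/w((2n−1)π/λ)`, the series converging. -/
theorem aliasing_integral_estimate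
    (φ : ℝ → ℂ) (w : ℝ → ℝ) (c ε : ℝ) (lam Λ A B M : ℝ)
    (hlam : 0 < lam) (hΛ : Λ = 2 * Real.pi / lam) (hA : 0 < A)
    (hφ : MemLp φ 2 volume)
    (hriesz : ∀ᵐ ξ : ℝ ∂volume,
      A ≤ Λ * ∑' n : ℤ, ‖FT φ (ξ + n * Λ)‖ ^ 2 ∧
      Λ * ∑' n : ℤ, ‖FT φ (ξ + n * Λ)‖ ^ 2 ≤ B)
    (hc : 0 < c) (hε : 0 < ε)
    (hwpos : ∀ x : ℝ, 0 < x → 0 < w x)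
    (hwmono : ∀ x y : ℝ, 0 < x → x ≤ y → w x ≤ w y)
    (hgrow : ∀ ξ : ℝ, 1 ≤ ξ → c * ξ ^ (1 + ε) ≤ w ξ)
    (hMint : Integrable (fun ξ : ℝ => w |ξ| * ‖FT φ ξ‖ ^ 2))
    (hM : M = ∫ ξ : ℝ, w |ξ| * ‖FT φ ξ‖ ^ 2) :
    Summable (fun n : ℕ => 1 / w ((2 * n + 1) * Real.pi / lam)) ∧
    (∫ ξ : ℝ,
        (((∑' n : ℤ, ‖FT φ (ξ + n * Λ)‖ ^ 2) - ‖FT φ ξ‖ ^ 2) /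
          (∑' n : ℤ, ‖FT φ (ξ + n * Λ)‖ ^ 2)) * ‖FT φ ξ‖ ^ 2)
      ≤ 2 * M * ∑' n : ℕ, 1 / w ((2 * n + 1) * Real.pi / lam) :=
  aliasing_integral_estimate_general φ w c ε lam Λ M hlam hΛ hφ hc hε hwpos hwmono hgrow hMint hM

end
end

section
/- Let N_m be the order-m (non-centered) B-spline, the m-fold convolution of the indicator of [0,1], with Fourier transform N̂_m(ξ) = (2π)^{-1/2}(e^{-iξ/2} sin(ξ/2)/(ξ/2))^m. If m ≥ 3 is odd, then ∑_{n∈ℤ} N̂_m(π + 2πn) = 0 while N̂_m(π) ≠ 0. -/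
open MeasureTheory Complex

noncomputable section

/-- The (non-centered) B-spline of order `m`: the `m`-fold convolution of the indicator
function of `[0,1]`, with `Nspline 1 = χ_[0,1]`. -/
def Nspline : ℕ → ℝ → ℂ
  | 0 => fun _ => 0
  | 1 => fun x => Set.indicator (Set.Icc (0 : ℝ) 1) (fun _ => (1 : ℂ)) x
  | m + 1 => fun x => ∫ y : ℝ, Nspline m y *
      Set.indicator (Set.Icc (0 : ℝ) 1) (fun _ => (1 : ℂ)) (x - y)

/-- For odd `m ≥ 3`, the periodization of `N̂_m` vanishes at `ξ = π` while `N̂_m(π) ≠ 0`: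
hence no sampling theorem holds in `V₁(N_m)` (Walter's interpolating function has a pole). -/
theorem bspline_periodization_vanishes
    (m : ℕ) (hm : Odd m) (hm3 : 3 ≤ m)
    (hFT : ∀ ξ : ℝ, ξ ≠ 0 → FT (Nspline m) ξ =
      ((Real.sqrt (2 * Real.pi))⁻¹ : ℝ) *
        (Complex.exp (-(Complex.I * (ξ / 2))) *
          (Complex.sin ((ξ : ℂ) / 2) / ((ξ : ℂ) / 2))) ^ m) :
    (∑' n : ℤ, FT (Nspline m) (Real.pi + 2 * Real.pi * n)) = 0 ∧
    FT (Nspline m) Real.pi ≠ 0 := by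
  have hπ : (Real.pi : ℝ) ≠ 0 := Real.pi_ne_zero
  have hc : ((Real.sqrt (2 * Real.pi))⁻¹ : ℝ) ≠ 0 := by
    have : Real.sqrt (2 * Real.pi) ≠ 0 := by
      positivity
    exact inv_ne_zero this
  have hcC : (((Real.sqrt (2 * Real.pi))⁻¹ : ℝ) : ℂ) ≠ 0 := by exact_mod_cast hc
  have hξne : ∀ n : ℤ, (Real.pi + 2 * Real.pi * n) ≠ 0 := by
    intro n
    have h2 : Real.pi + 2 * Real.pi * n = (2 * (n : ℝ) + 1) * Real.pi := by ring
    rw [h2]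
    refine mul_ne_zero ?_ hπ
    have : (2 * n + 1 : ℤ) ≠ 0 := by omega
    exact_mod_cast this
  constructor
  · set f : ℤ → ℂ := fun n => FT (Nspline m) (Real.pi + 2 * Real.pi * n) with hf
    have key : ∀ n : ℤ, f (-1 - n) = - f n := by
      intro n
      have h1 : (Real.pi + 2 * Real.pi * ((-1 - n : ℤ) : ℝ)) = -(Real.pi + 2 * Real.pi * n) := by
        push_cast; ring
      have hz := congrArg (Complex.ofReal) h1
      simp only [hf]
      rw [hFT _ (hξne (-1 - n)), hFT _ (hξne n), hz, Complex.ofReal_neg]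
      set z : ℂ := ((Real.pi + 2 * Real.pi * ((n : ℤ) : ℝ) : ℝ) : ℂ) with hzdef
      have hexpz : Complex.exp (Complex.I * z) = -1 := by
        have : Complex.I * z = Real.pi * Complex.I + n * (2 * Real.pi * Complex.I) := by
          rw [hzdef]; push_cast; ring
        rw [this, Complex.exp_add, Complex.exp_pi_mul_I, Complex.exp_int_mul_two_pi_mul_I]
        ring
      have hexp : Complex.exp (-(Complex.I * (-z / 2))) = -Complex.exp (-(Complex.I * (z / 2))) := by
        have : (-(Complex.I * (-z / 2))) = (-(Complex.I * (z / 2))) + Complex.I * z := by ring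
        rw [this, Complex.exp_add, hexpz]; ring
      have hsin : Complex.sin (-z / 2) / (-z / 2) = Complex.sin (z / 2) / (z / 2) := by
        rw [neg_div, Complex.sin_neg, neg_div_neg_eq]
      rw [hexp, hsin, neg_mul, hm.neg_pow, mul_neg]
    have h1 : ∑' n : ℤ, f n = ∑' n : ℤ, f ((-1 : ℤ) - n) := by
      have := (Equiv.subLeft (-1 : ℤ)).tsum_eq f
      simpa [Equiv.subLeft_apply] using this.symm
    have h2 : ∑' n : ℤ, f ((-1 : ℤ) - n) = ∑' n : ℤ, -f n := by
      apply tsum_congr; intro n; exact key n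
    have h3 : ∑' n : ℤ, -f n = -∑' n : ℤ, f n := tsum_neg
    have : ∑' n : ℤ, f n = -∑' n : ℤ, f n := h1.trans (h2.trans h3)
    have h4 : (2 : ℂ) * ∑' n : ℤ, f n = 0 := by linear_combination this
    have := mul_eq_zero.mp h4
    rcases this with h | h
    · norm_num at h
    · exact h
  · rw [hFT _ hπ]
    refine mul_ne_zero hcC (pow_ne_zero _ (mul_ne_zero (Complex.exp_ne_zero _) ?_))
    have hsin : Complex.sin ((Real.pi : ℂ) / 2) = 1 := by
      have : ((Real.pi : ℝ) : ℂ) / 2 = ((Real.pi / 2 : ℝ) : ℂ) := by push_cast; ring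
      rw [this, ← Complex.ofReal_sin, Real.sin_pi_div_two, Complex.ofReal_one]
    rw [hsin]
    refine div_ne_zero one_ne_zero ?_
    simp [hπ]


end
end
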